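/- arXiv:1208.3040 — 2 statements merged into one kernel-verified Lean document; each statement's English description precedes it below -/
import Mathlib

section
/- Let m, l be natural numbers and for each t ∈ [0,1] let λ : ℕ → ℝ be given by continuous functions λ_j(t), nondecreasing in j, with λ_j(t) → ∞ as j → ∞ uniformly in t. Assume for all t, exactly l indices j satisfy λ_j(t) = 0. If λ_m(0) < 0 < λ_{m+l+1}(0) and λ_j(0) = 0 for m+1 ≤ j ≤ m+l, then for all t, λ_m(t) < 0 < λ_{m+l+1}(t) and λ_j(t) = 0 for m+1 ≤ j ≤ m+l. -/
private lemma ncard_Icc_nat (a b : ℕ) : (Set.Icc a b).ncard = b + 1 - a := by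
  rw [← Finset.coe_Icc, Set.ncard_coe_finset, Nat.card_Icc]

/-- Local-constancy argument in the proof of conformal invariance of the number of
negative eigenvalues: with continuous eigenvalue branches, monotone in the index,
diverging uniformly, and exactly `l` zero eigenvalues for every `t ∈ [0,1]`, the
position of the zero eigenvalues in the ordered sequence cannot change. -/
theorem zero_eigenvalue_position_constant (m l : ℕ) (lam : ℕ → ℝ → ℝ)
    (hcont : ∀ j, ContinuousOn (lam j) (Set.Icc (0 : ℝ) 1))
    (hmono : ∀ t ∈ Set.Icc (0 : ℝ) 1, ∀ j, lam j t ≤ lam (j + 1) t)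
    (hdiv : ∀ C : ℝ, ∃ J : ℕ, ∀ j ≥ J, ∀ t ∈ Set.Icc (0 : ℝ) 1, C < lam j t)
    (hker : ∀ t ∈ Set.Icc (0 : ℝ) 1, {j : ℕ | lam j t = 0}.ncard = l)
    (h0neg : lam m 0 < 0) (h0pos : 0 < lam (m + l + 1) 0)
    (h0zero : ∀ j, m + 1 ≤ j → j ≤ m + l → lam j 0 = 0) :
    ∀ t ∈ Set.Icc (0 : ℝ) 1,
      lam m t < 0 ∧ 0 < lam (m + l + 1) t ∧
        ∀ j, m + 1 ≤ j → j ≤ m + l → lam j t = 0 := by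
  -- monotonicity in the index
  have hmono' : ∀ t ∈ Set.Icc (0 : ℝ) 1, Monotone (fun j => lam j t) := fun t ht =>
    monotone_nat_of_le_succ (fun j => hmono t ht j)
  -- the zero set is always finite
  have hfin : ∀ t ∈ Set.Icc (0 : ℝ) 1, {j : ℕ | lam j t = 0}.Finite := by
    intro t ht
    obtain ⟨J, hJ⟩ := hdiv 0
    apply Set.Finite.subset (Set.finite_Iio J)
    intro j hj
    simp only [Set.mem_setOf_eq] at hj
    by_contra h
    rw [Set.mem_Iio, not_lt] at h
    exact absurd hj (ne_of_gt (hJ j h t ht))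
  -- strict inequalities force the zeros to sit exactly in [m+1, m+l]
  have key : ∀ t ∈ Set.Icc (0 : ℝ) 1, lam m t < 0 → 0 < lam (m + l + 1) t →
      ∀ j, m + 1 ≤ j → j ≤ m + l → lam j t = 0 := by
    intro t ht hneg hpos
    have hsub : {j : ℕ | lam j t = 0} ⊆ Set.Icc (m + 1) (m + l) := by
      intro j hj
      simp only [Set.mem_setOf_eq] at hj
      constructor
      · by_contra h
        push_neg at h
        have := hmono' t ht (Nat.lt_succ_iff.mp h)
        simp only at this
        linarith
      · by_contra h
        push_neg at h
        have := hmono' t ht h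
        simp only at this
        linarith
    have heq : {j : ℕ | lam j t = 0} = Set.Icc (m + 1) (m + l) := by
      apply Set.eq_of_subset_of_ncard_le hsub
      rw [hker t ht, ncard_Icc_nat]; omega
    intro j h1 h2
    have : j ∈ {j : ℕ | lam j t = 0} := heq ▸ Set.mem_Icc.mpr ⟨h1, h2⟩
    exact this
  -- weak inequalities together with the zeros force strict inequalities
  have keyV : ∀ t ∈ Set.Icc (0 : ℝ) 1, lam m t ≤ 0 → 0 ≤ lam (m + l + 1) t →
      (∀ j, m + 1 ≤ j → j ≤ m + l → lam j t = 0) →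
      lam m t < 0 ∧ 0 < lam (m + l + 1) t := by
    intro t ht h1 h2 hz
    have hZfin := hfin t ht
    constructor
    · rcases lt_or_eq_of_le h1 with h | h
      · exact h
      · exfalso
        have hsub : Set.Icc m (m + l) ⊆ {j : ℕ | lam j t = 0} := by
          intro j hj
          rw [Set.mem_Icc] at hj
          rcases Nat.eq_or_lt_of_le hj.1 with h' | h'
          · simp [Set.mem_setOf_eq, ← h', h.symm]
          · exact hz j h' hj.2
        have := Set.ncard_le_ncard hsub hZfin
        rw [hker t ht, ncard_Icc_nat] at this
        omega
    · rcases lt_or_eq_of_le h2 with h | h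
      · exact h
      · exfalso
        have hsub : Set.Icc (m + 1) (m + l + 1) ⊆ {j : ℕ | lam j t = 0} := by
          intro j hj
          rw [Set.mem_Icc] at hj
          rcases Nat.eq_or_lt_of_le hj.2 with h' | h'
          · simp [Set.mem_setOf_eq, h', ← h]
          · exact hz j hj.1 (Nat.lt_succ_iff.mp h')
        have := Set.ncard_le_ncard hsub hZfin
        rw [hker t ht, ncard_Icc_nat] at this
        omega
  -- the clopen argument on the connected interval
  set X := Set.Icc (0 : ℝ) 1
  haveI : PreconnectedSpace X := Subtype.preconnectedSpace isPreconnected_Icc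
  set U : Set X := {x : X | lam m ↑x < 0 ∧ 0 < lam (m + l + 1) ↑x} with hU
  have hcm : Continuous fun x : X => lam m ↑x := (hcont m).restrict
  have hcM : Continuous fun x : X => lam (m + l + 1) ↑x := (hcont _).restrict
  have hUopen : IsOpen U :=
    (isOpen_lt hcm continuous_const).inter (isOpen_lt continuous_const hcM)
  have hUclosed : IsClosed U := by
    have hVeq : U = {x : X | lam m ↑x ≤ 0} ∩ {x : X | 0 ≤ lam (m + l + 1) ↑x} ∩
        ⋂ j ∈ Set.Icc (m + 1) (m + l), {x : X | lam j ↑x = 0} := by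
      ext x
      simp only [hU, Set.mem_setOf_eq, Set.mem_inter_iff, Set.mem_iInter, Set.mem_Icc]
      constructor
      · rintro ⟨ha, hb⟩
        exact ⟨⟨ha.le, hb.le⟩, fun j hj => key x.1 x.2 ha hb j hj.1 hj.2⟩
      · rintro ⟨⟨ha, hb⟩, hc⟩
        exact keyV x.1 x.2 ha hb (fun j hj1 hj2 => hc j ⟨hj1, hj2⟩)
    rw [hVeq]
    exact (((isClosed_le hcm continuous_const).inter
      (isClosed_le continuous_const hcM)).inter
      (isClosed_biInter fun j _ => isClosed_eq ((hcont j).restrict) continuous_const))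
  have h0mem : (⟨0, le_refl 0, zero_le_one⟩ : X) ∈ U := ⟨h0neg, h0pos⟩
  have hUuniv : U = Set.univ :=
    IsClopen.eq_univ ⟨hUclosed, hUopen⟩ ⟨_, h0mem⟩
  intro t ht
  have hx : (⟨t, ht⟩ : X) ∈ U := hUuniv ▸ Set.mem_univ _
  obtain ⟨ha, hb⟩ := hx
  exact ⟨ha, hb, key t ht ha hb⟩
end

section
/- Let d ≥ 1, s > 0, n ∈ ℤ∖{0}, a ∈ ℕ. The quantity μ(n,a) = 2π|n|s(d+2a) + 4n²s^{-2d}π² - ((2d-1)/16)s^{2d+2} is negative if and only if s^{2d+1} > (8π|n|/(2d-1))(2(d+2a) + √(4(d+2a)²+2d-1)). -/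
open Real

/-- The Yamabe eigenvalue `μ(n,a) = 2π|n|s(d+2a) + 4n²s^{-2d}π² - ((2d-1)/16)s^{2d+2}` on
the Heisenberg manifold is negative if and only if
`s^{2d+1} > (8π|n|/(2d-1))(2(d+2a) + √(4(d+2a)² + 2d-1))`. -/
theorem heisenberg_yamabe_negative_eigenvalue (d : ℕ) (hd : 1 ≤ d) (s : ℝ) (hs : 0 < s)
    (n : ℤ) (hn : n ≠ 0) (a : ℕ) :
    2 * π * |(n : ℝ)| * s * ((d : ℝ) + 2 * a) + 4 * (n : ℝ) ^ 2 * π ^ 2 / s ^ (2 * d)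
        - ((2 * (d : ℝ) - 1) / 16) * s ^ (2 * d + 2) < 0
      ↔ (8 * π * |(n : ℝ)| / (2 * (d : ℝ) - 1)) *
            (2 * ((d : ℝ) + 2 * a) + Real.sqrt (4 * ((d : ℝ) + 2 * a) ^ 2 + 2 * d - 1))
          < s ^ (2 * d + 1) := by
  have hπ := Real.pi_pos
  have hd1 : (1 : ℝ) ≤ (d : ℝ) := by exact_mod_cast hd
  have hDpos : (0 : ℝ) < 2 * (d : ℝ) - 1 := by linarith
  set A : ℝ := (d : ℝ) + 2 * a with hAdef
  have hA1 : (1 : ℝ) ≤ A := by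
    have : (0 : ℝ) ≤ (a : ℝ) := Nat.cast_nonneg a
    simp only [hAdef]; linarith
  have hNpos : (0 : ℝ) < |(n : ℝ)| := by
    have : (n : ℝ) ≠ 0 := Int.cast_ne_zero.mpr hn
    exact abs_pos.mpr this
  have hnsq : |(n : ℝ)| ^ 2 = (n : ℝ) ^ 2 := sq_abs _
  set R : ℝ := Real.sqrt (4 * A ^ 2 + 2 * d - 1) with hRdef
  have hRsq : R ^ 2 = 4 * A ^ 2 + 2 * d - 1 := by
    rw [hRdef]; exact Real.sq_sqrt (by nlinarith)
  have hRpos : 0 < R := by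
    rw [hRdef]; exact Real.sqrt_pos.mpr (by nlinarith)
  have hR2A : 2 * A < R := by nlinarith
  have hu : (0 : ℝ) < s ^ (2 * d) := pow_pos hs _
  have ht : (0 : ℝ) < s ^ (2 * d + 1) := pow_pos hs _
  set t : ℝ := s ^ (2 * d + 1) with htdef
  have hE : 2 * π * |(n : ℝ)| * s * A + 4 * (n : ℝ) ^ 2 * π ^ 2 / s ^ (2 * d)
      - ((2 * (d : ℝ) - 1) / 16) * s ^ (2 * d + 2)
      = (2 * π * |(n : ℝ)| * t * A + 4 * (n : ℝ) ^ 2 * π ^ 2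
          - ((2 * (d : ℝ) - 1) / 16) * t ^ 2) / s ^ (2 * d) := by
    rw [htdef]
    field_simp
    ring
  rw [hE, div_lt_iff₀ hu, zero_mul, div_mul_eq_mul_div _ _ (2 * A + R), div_lt_iff₀ hDpos]
  have hfactor2 : 0 < (2 * (d : ℝ) - 1) * t + 8 * π * |(n : ℝ)| * (R - 2 * A) := by
    have h1 : 0 < 8 * π * |(n : ℝ)| * (R - 2 * A) := by
      have : 0 < R - 2 * A := by linarith
      positivity
    nlinarith [mul_pos hDpos ht]
  have key : (t * (2 * (d : ℝ) - 1) - 8 * π * |(n : ℝ)| * (2 * A + R)) *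
      ((2 * (d : ℝ) - 1) * t + 8 * π * |(n : ℝ)| * (R - 2 * A))
      = 16 * (2 * (d : ℝ) - 1) * ((2 * (d : ℝ) - 1) / 16 * t ^ 2
          - 2 * π * |(n : ℝ)| * t * A - 4 * (n : ℝ) ^ 2 * π ^ 2) := by
    linear_combination (-(64 * π ^ 2 * |(n : ℝ)| ^ 2)) * hRsq
      + (-(64 * π ^ 2 * (2 * (d : ℝ) - 1))) * hnsq
  constructor
  · intro h
    have hprod : 0 < (t * (2 * (d : ℝ) - 1) - 8 * π * |(n : ℝ)| * (2 * A + R)) *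
        ((2 * (d : ℝ) - 1) * t + 8 * π * |(n : ℝ)| * (R - 2 * A)) := by
      rw [key]
      have hX : 0 < (2 * (d : ℝ) - 1) / 16 * t ^ 2
          - 2 * π * |(n : ℝ)| * t * A - 4 * (n : ℝ) ^ 2 * π ^ 2 := by linarith
      exact mul_pos (by positivity) hX
    have hf1 := (mul_pos_iff_of_pos_right hfactor2).mp hprod
    linarith
  · intro h
    have hf1 : 0 < t * (2 * (d : ℝ) - 1) - 8 * π * |(n : ℝ)| * (2 * A + R) := by linarith
    have hprod := mul_pos hf1 hfactor2
    rw [key] at hprod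
    have hc : (0:ℝ) < 16 * (2 * (d : ℝ) - 1) := by linarith
    rw [mul_pos_iff_of_pos_left hc] at hprod
    linarith
end
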